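/- The translations between full nested sequents and labelled tree sequents are mutually inverse on nested sequents: for every full nested sequent Σ and every label w, applying the labelling translation 𝔏_w and then the nesting translation 𝔑 returns Σ, i.e. 𝔑(𝔏_w(Σ)) = Σ. -/
import Mathlib


inductive Fml : Type where
  | atom : ℕ → Fml
  | bot : Fml
  | or : Fml → Fml → Fml
  | and : Fml → Fml → Fml
  | imp : Fml → Fml → Fml
  | dia : Fml → Fml
  | box : Fml → Fml

structure BiModel where
  W : Type
  ne : Nonempty W
  le : W → W → Prop
  R : W → W → Prop
  V : W → ℕ → Prop
  le_refl : ∀ w, le w w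
  le_trans : ∀ w u v, le w u → le u v → le w v
  F1 : ∀ w v v', R w v → le v v' → ∃ w', le w w' ∧ R w' v'
  F2 : ∀ w w' v, le w w' → R w v → ∃ v', R w' v' ∧ le v v'
  mono : ∀ w u p, le w u → V w p → V u p

def sat (M : BiModel) : M.W → Fml → Prop
  | w, .atom p => M.V w p
  | _, .bot => False
  | w, .or A B => sat M w A ∨ sat M w B
  | w, .and A B => sat M w A ∧ sat M w B
  | w, .imp A B => ∀ w', M.le w w' → sat M w' A → sat M w' B
  | w, .dia A => ∃ v, M.R w v ∧ sat M v A
  | w, .box A => ∀ w' v', M.le w w' → M.R w' v' → sat M v' A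

inductive NSeq : Type where
  | node : List Fml → Option Fml → List NSeq → NSeq

mutual
  def outCount : NSeq → ℕ
    | .node _ o cs => (if o.isSome then 1 else 0) + outCountL cs
  def outCountL : List NSeq → ℕ
    | [] => 0
    | c :: cs => outCount c + outCountL cs
end

abbrev NLab := List ℕ

structure LTS where
  rel : List (NLab × NLab)
  gam : List (NLab × Fml)
  suc : List (NLab × Fml)

def LTS.comp (a b : LTS) : LTS := ⟨a.rel ++ b.rel, a.gam ++ b.gam, a.suc ++ b.suc⟩

mutual
  def Ltr : NLab → NSeq → LTS
    | v, .node inp out cs =>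
      LTS.comp ⟨[], inp.map (fun A => (v, A)), out.toList.map (fun A => (v, A))⟩
        (LtrL v 0 cs)
  def LtrL : NLab → ℕ → List NSeq → LTS
    | _, _, [] => ⟨[], [], []⟩
    | v, i, c :: cs =>
      LTS.comp (LTS.comp ⟨[(v, v ++ [i])], [], []⟩ (Ltr (v ++ [i]) c)) (LtrL v (i+1) cs)
end

def inputsAt (S : LTS) (v : NLab) : List Fml :=
  (S.gam.filter (fun p => p.1 == v)).map Prod.snd

def outputAt (S : LTS) (v : NLab) : Option Fml :=
  (S.suc.find? (fun p => p.1 == v)).map Prod.snd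

def childrenOf (S : LTS) (v : NLab) : List NLab :=
  (S.rel.filter (fun p => p.1 == v)).map Prod.snd

def NtrAux (S : LTS) : ℕ → NLab → NSeq
  | 0, v => .node (inputsAt S v) (outputAt S v) []
  | n+1, v => .node (inputsAt S v) (outputAt S v) ((childrenOf S v).map (NtrAux S n))

def Ntr (S : LTS) (root : NLab) : NSeq := NtrAux S (S.rel.length + 1) root


namespace RT

/-! ### Prefix arithmetic -/

lemma pref_ne {v l : NLab} {j : ℕ} (h : v ++ [j] <+: l) : l ≠ v := by
  intro he
  have := h.length_le
  simp [he] at this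

lemma pref_diff {v l u : NLab} {j k : ℕ} (hj : v ++ [j] <+: l)
    (hk : v ++ [k] <+: u) (hjk : j ≠ k) : l ≠ u := by
  rintro rfl
  obtain ⟨t, ht⟩ := hj
  obtain ⟨s, hs⟩ := hk
  rw [← hs] at ht
  have := (List.append_inj ht (by simp)).1
  have := (List.append_inj this (by simp)).2
  simp at this
  exact hjk this

/-! ### Label lemmas -/

mutual
theorem labA (N : NSeq) (v : NLab) :
    (∀ p ∈ (Ltr v N).gam, v <+: p.1) ∧ (∀ p ∈ (Ltr v N).suc, v <+: p.1) ∧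
    (∀ p ∈ (Ltr v N).rel, v <+: p.1 ∧ ∃ j, p.2 = p.1 ++ [j]) := by
  obtain ⟨inp, out, cs⟩ := N
  have hB := labB cs v 0
  simp only [Ltr, LTS.comp] at *
  refine ⟨?_, ?_, ?_⟩
  · intro p hp
    simp only [List.mem_append, List.mem_map] at hp
    rcases hp with ⟨A, _, rfl⟩ | hp
    · exact List.prefix_refl v
    · obtain ⟨j, _, hj⟩ := hB.1 p hp
      exact (List.prefix_append v [j]).trans hj
  · intro p hp
    simp only [List.mem_append, List.mem_map] at hp
    rcases hp with ⟨A, _, rfl⟩ | hp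
    · exact List.prefix_refl v
    · obtain ⟨j, _, hj⟩ := hB.2.1 p hp
      exact (List.prefix_append v [j]).trans hj
  · intro p hp
    simp only [List.nil_append] at hp
    obtain ⟨h1, h2⟩ := hB.2.2 p hp
    refine ⟨?_, h2⟩
    rcases h1 with rfl | ⟨j, _, hj⟩
    · exact List.prefix_refl _
    · exact (List.prefix_append v [j]).trans hj

theorem labB (cs : List NSeq) (v : NLab) (i : ℕ) :
    (∀ p ∈ (LtrL v i cs).gam, ∃ j, i ≤ j ∧ v ++ [j] <+: p.1) ∧
    (∀ p ∈ (LtrL v i cs).suc, ∃ j, i ≤ j ∧ v ++ [j] <+: p.1) ∧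
    (∀ p ∈ (LtrL v i cs).rel,
      (p.1 = v ∨ ∃ j, i ≤ j ∧ v ++ [j] <+: p.1) ∧ ∃ j, p.2 = p.1 ++ [j]) := by
  match cs with
  | [] => simp [LtrL]
  | c :: cs =>
    have hA := labA c (v ++ [i])
    have hB := labB cs v (i+1)
    simp only [LtrL, LTS.comp] at *
    refine ⟨?_, ?_, ?_⟩
    · intro p hp
      simp only [List.nil_append, List.mem_append] at hp
      rcases hp with hp | hp
      · exact ⟨i, le_refl i, hA.1 p hp⟩
      · obtain ⟨j, hj1, hj2⟩ := hB.1 p hp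
        exact ⟨j, by omega, hj2⟩
    · intro p hp
      simp only [List.nil_append, List.mem_append] at hp
      rcases hp with hp | hp
      · exact ⟨i, le_refl i, hA.2.1 p hp⟩
      · obtain ⟨j, hj1, hj2⟩ := hB.2.1 p hp
        exact ⟨j, by omega, hj2⟩
    · intro p hp
      simp only [List.cons_append, List.mem_cons, List.mem_append] at hp
      rcases hp with rfl | hp | hp
      · exact ⟨Or.inl rfl, i, rfl⟩
      · rcases hp with hp | hp
        · simp at hp
        · obtain ⟨h1, h2⟩ := hA.2.2 p hp
          exact ⟨Or.inr ⟨i, le_refl i, h1⟩, h2⟩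
      · obtain ⟨h1, h2⟩ := hB.2.2 p hp
        refine ⟨?_, h2⟩
        rcases h1 with rfl | ⟨j, hj1, hj2⟩
        · exact Or.inl rfl
        · exact Or.inr ⟨j, by omega, hj2⟩
end


/-! ### Query lemmas -/

lemma inputs_nil {S : LTS} {u : NLab} (h : ∀ p ∈ S.gam, p.1 ≠ u) :
    inputsAt S u = [] := by
  simp only [inputsAt]
  rw [List.filter_eq_nil_iff.mpr]
  · rfl
  · intro p hp; simpa using h p hp

lemma output_none {S : LTS} {u : NLab} (h : ∀ p ∈ S.suc, p.1 ≠ u) :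
    outputAt S u = none := by
  simp only [outputAt]
  rw [List.find?_eq_none.mpr]
  · rfl
  · intro p hp; simpa using h p hp

lemma children_nil {S : LTS} {u : NLab} (h : ∀ p ∈ S.rel, p.1 ≠ u) :
    childrenOf S u = [] := by
  simp only [childrenOf]
  rw [List.filter_eq_nil_iff.mpr]
  · rfl
  · intro p hp; simpa using h p hp

lemma childrenOf_LtrL (v : NLab) (cs : List NSeq) (i : ℕ) :
    childrenOf (LtrL v i cs) v = (List.range' i cs.length).map (fun j => v ++ [j]) := by
  induction cs generalizing i with
  | nil => simp [LtrL, childrenOf]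
  | cons c cs ih =>
    have hA := (labA c (v ++ [i])).2.2
    have hnilA : (Ltr (v ++ [i]) c).rel.filter (fun p => p.1 == v) = [] := by
      rw [List.filter_eq_nil_iff]
      intro p hp
      simpa using pref_ne (hA p hp).1
    simp only [LtrL, LTS.comp, childrenOf, List.filter_append, List.map_append,
      List.length_cons, List.range'_succ]
    rw [hnilA]
    have : List.filter (fun p => p.1 == v) [(v, v ++ [i])] = [(v, v ++ [i])] := by simp
    rw [this]
    have := ih (i+1)
    simp only [childrenOf] at this
    simp [this]

lemma inputsAt_root (v : NLab) (inp : List Fml) (out : Option Fml) (cs : List NSeq) :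
    inputsAt (Ltr v (.node inp out cs)) v = inp := by
  have hB := (labB cs v 0).1
  have hnil : inputsAt (LtrL v 0 cs) v = [] := by
    refine inputs_nil fun p hp => ?_
    obtain ⟨j, _, hj⟩ := hB p hp
    exact pref_ne hj
  simp only [Ltr, LTS.comp, inputsAt, List.filter_append, List.map_append] at *
  rw [hnil]
  have : (inp.map fun A => (v, A)).filter (fun p => p.1 == v)
      = inp.map fun A => (v, A) := by
    rw [List.filter_eq_self]
    intro p hp
    simp only [List.mem_map] at hp
    obtain ⟨A, _, rfl⟩ := hp
    simp
  rw [this]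
  simp [List.map_map, Function.comp_def]

lemma outputAt_root (v : NLab) (inp : List Fml) (out : Option Fml) (cs : List NSeq) :
    outputAt (Ltr v (.node inp out cs)) v = out := by
  have hB := (labB cs v 0).2.1
  have hnil : List.find? (fun p => p.1 == v) (LtrL v 0 cs).suc = none := by
    refine List.find?_eq_none.mpr fun p hp => ?_
    obtain ⟨j, _, hj⟩ := hB p hp
    simpa using pref_ne hj
  simp only [Ltr, LTS.comp, outputAt, List.find?_append]
  rw [hnil, Option.or_none]
  cases out with
  | none => simp
  | some A => simp [List.find?]

lemma childrenOf_root (v : NLab) (inp : List Fml) (out : Option Fml) (cs : List NSeq) :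
    childrenOf (Ltr v (.node inp out cs)) v
      = (List.range' 0 cs.length).map (fun j => v ++ [j]) := by
  have := childrenOf_LtrL v cs 0
  simp only [Ltr, LTS.comp, childrenOf, List.nil_append] at *
  exact this

lemma inputsAt_comp (a b : LTS) (u : NLab) :
    inputsAt (a.comp b) u = inputsAt a u ++ inputsAt b u := by
  simp [inputsAt, LTS.comp, List.filter_append]

lemma outputAt_comp (a b : LTS) (u : NLab) :
    outputAt (a.comp b) u = (outputAt a u).or (outputAt b u) := by
  simp only [outputAt, LTS.comp, List.find?_append]
  exact Option.map_or ..

lemma childrenOf_comp (a b : LTS) (u : NLab) :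
    childrenOf (a.comp b) u = childrenOf a u ++ childrenOf b u := by
  simp [childrenOf, LTS.comp, List.filter_append]

lemma Ltr_nil_at (c : NSeq) (w u : NLab) (hne : ∀ l : NLab, w <+: l → l ≠ u) :
    inputsAt (Ltr w c) u = [] ∧ outputAt (Ltr w c) u = none ∧
      childrenOf (Ltr w c) u = [] := by
  have hA := labA c w
  exact ⟨inputs_nil fun p hp => hne _ (hA.1 p hp),
    output_none fun p hp => hne _ (hA.2.1 p hp),
    children_nil fun p hp => hne _ ((hA.2.2 p hp).1)⟩

lemma LtrL_nil_at (cs : List NSeq) (v : NLab) (i : ℕ) (u : NLab)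
    (hnv : v ≠ u) (hne : ∀ (j : ℕ) (l : NLab), i ≤ j → v ++ [j] <+: l → l ≠ u) :
    inputsAt (LtrL v i cs) u = [] ∧ outputAt (LtrL v i cs) u = none ∧
      childrenOf (LtrL v i cs) u = [] := by
  have hB := labB cs v i
  refine ⟨inputs_nil fun p hp => ?_, output_none fun p hp => ?_,
    children_nil fun p hp => ?_⟩
  · obtain ⟨j, hj1, hj2⟩ := hB.1 p hp; exact hne j _ hj1 hj2
  · obtain ⟨j, hj1, hj2⟩ := hB.2.1 p hp; exact hne j _ hj1 hj2
  · rcases (hB.2.2 p hp).1 with h | ⟨j, hj1, hj2⟩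
    · rw [h]; exact hnv
    · exact hne j _ hj1 hj2

lemma single_rel_nil_at (v x u : NLab) (hnv : v ≠ u) :
    inputsAt ⟨[(v, x)], [], []⟩ u = [] ∧ outputAt ⟨[(v, x)], [], []⟩ u = none ∧
      childrenOf ⟨[(v, x)], [], []⟩ u = [] := by
  refine ⟨rfl, rfl, ?_⟩
  simp [childrenOf, hnv]

lemma QL (v : NLab) (cs : List NSeq) : ∀ (i k : ℕ) (c : NSeq), i ≤ k →
    cs[k - i]? = some c → ∀ u, v ++ [k] <+: u →
    inputsAt (LtrL v i cs) u = inputsAt (Ltr (v ++ [k]) c) u ∧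
    outputAt (LtrL v i cs) u = outputAt (Ltr (v ++ [k]) c) u ∧
    childrenOf (LtrL v i cs) u = childrenOf (Ltr (v ++ [k]) c) u := by
  induction cs with
  | nil => intro i k c _ hc; simp at hc
  | cons c' cs ih =>
    intro i k c hik hc u hu
    have hnv : v ≠ u := (pref_ne hu).symm
    have h1 := single_rel_nil_at v (v ++ [i]) u hnv
    rcases Nat.lt_or_ge i k with hlt | hge
    · -- i < k : skip the head child
      have h2 : ∀ l : NLab, v ++ [i] <+: l → l ≠ u := fun l hl =>
        pref_diff hl hu (by omega)
      have h2' := Ltr_nil_at c' (v ++ [i]) u h2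
      have hki : k - i = (k - (i+1)) + 1 := by omega
      rw [hki, List.getElem?_cons_succ] at hc
      have ih' := ih (i+1) k c (by omega) hc u hu
      simp only [LtrL, inputsAt_comp, outputAt_comp, childrenOf_comp,
        h1.1, h1.2.1, h1.2.2, h2'.1, h2'.2.1, h2'.2.2, ih'.1, ih'.2.1, ih'.2.2,
        List.nil_append, Option.none_or]
      refine ⟨?_, ?_, ?_⟩ <;> trivial
    · -- i = k : the head child is the one
      have hik' : i = k := by omega
      subst hik'
      simp only [Nat.sub_self, List.getElem?_cons_zero, Option.some.injEq] at hc
      subst hc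
      have h3 : ∀ (j : ℕ) (l : NLab), i + 1 ≤ j → v ++ [j] <+: l → l ≠ u :=
        fun j l hj hl => pref_diff hl hu (by omega)
      have h3' := LtrL_nil_at cs v (i+1) u hnv h3
      simp only [LtrL, inputsAt_comp, outputAt_comp, childrenOf_comp,
        h1.1, h1.2.1, h1.2.2, h3'.1, h3'.2.1, h3'.2.2,
        List.nil_append, List.append_nil, Option.none_or, Option.or_none]
      refine ⟨?_, ?_, ?_⟩ <;> trivial

lemma queries_child (v : NLab) (inp : List Fml) (out : Option Fml) (cs : List NSeq)
    (k : ℕ) (hk : k < cs.length) (u : NLab) (hu : v ++ [k] <+: u) :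
    inputsAt (Ltr v (.node inp out cs)) u = inputsAt (Ltr (v ++ [k]) cs[k]) u ∧
    outputAt (Ltr v (.node inp out cs)) u = outputAt (Ltr (v ++ [k]) cs[k]) u ∧
    childrenOf (Ltr v (.node inp out cs)) u = childrenOf (Ltr (v ++ [k]) cs[k]) u := by
  have hnv : v ≠ u := (pref_ne hu).symm
  have hQ := QL v cs 0 k cs[k] (Nat.zero_le k)
    (by simp [List.getElem?_eq_getElem hk]) u hu
  have hroot : inputsAt (⟨[], inp.map (fun A => (v, A)),
        out.toList.map (fun A => (v, A))⟩ : LTS) u = [] ∧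
      outputAt (⟨[], inp.map (fun A => (v, A)),
        out.toList.map (fun A => (v, A))⟩ : LTS) u = none ∧
      childrenOf (⟨[], inp.map (fun A => (v, A)),
        out.toList.map (fun A => (v, A))⟩ : LTS) u = [] := by
    refine ⟨inputs_nil fun p hp => ?_, output_none fun p hp => ?_, rfl⟩
    · simp only [List.mem_map] at hp; obtain ⟨A, _, rfl⟩ := hp; exact hnv
    · simp only [List.mem_map] at hp; obtain ⟨A, _, rfl⟩ := hp; exact hnv
  simp only [Ltr, inputsAt_comp, outputAt_comp, childrenOf_comp,
    hroot.1, hroot.2.1, hroot.2.2, hQ.1, hQ.2.1, hQ.2.2,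
    List.nil_append, Option.none_or]
  refine ⟨?_, ?_, ?_⟩ <;> trivial

/-! ### Agreement -/

lemma agree (S T : LTS) (p : NLab)
    (hq : ∀ u, p <+: u → inputsAt S u = inputsAt T u ∧
      outputAt S u = outputAt T u ∧ childrenOf S u = childrenOf T u)
    (hr : ∀ q ∈ S.rel, q.1 <+: q.2) :
    ∀ (n : ℕ) (u : NLab), p <+: u → NtrAux S n u = NtrAux T n u := by
  intro n
  induction n with
  | zero => intro u hu; simp [NtrAux, (hq u hu).1, (hq u hu).2.1]
  | succ n ih =>
    intro u hu
    simp only [NtrAux, (hq u hu).1, (hq u hu).2.1]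
    rw [← (hq u hu).2.2]
    congr 1
    refine List.map_congr_left fun b hb => ?_
    have hub : u <+: b := by
      simp only [childrenOf, List.mem_map] at hb
      obtain ⟨q, hq', rfl⟩ := hb
      have := List.of_mem_filter hq'
      have heq : q.1 = u := by simpa using this
      have := hr q (List.mem_of_mem_filter hq')
      rwa [heq] at this
    exact ih b (hu.trans hub)

/-! ### Depth -/

mutual
  def depth : NSeq → ℕ
    | .node _ _ cs => depthL cs + 1
  def depthL : List NSeq → ℕ
    | [] => 0
    | c :: cs => max (depth c) (depthL cs)
end

mutual
theorem depthA (N : NSeq) (v : NLab) : depth N ≤ (Ltr v N).rel.length + 1 := by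
  obtain ⟨inp, out, cs⟩ := N
  have := depthB cs v 0
  simp only [depth, Ltr, LTS.comp, List.nil_append]
  omega

theorem depthB (cs : List NSeq) (v : NLab) (i : ℕ) :
    depthL cs ≤ (LtrL v i cs).rel.length := by
  match cs with
  | [] => simp [depthL]
  | c :: cs =>
    have h1 := depthA c (v ++ [i])
    have h2 := depthB cs v (i+1)
    simp only [depthL, LtrL, LTS.comp, List.length_append, List.cons_append,
      List.length_cons] at *
    omega
end

lemma depth_mem {c : NSeq} {cs : List NSeq} (h : c ∈ cs) : depth c ≤ depthL cs := by
  induction cs with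
  | nil => simp at h
  | cons c' cs ih =>
    simp only [depthL]
    rcases List.mem_cons.mp h with rfl | h
    · exact le_max_left _ _
    · exact le_trans (ih h) (le_max_right _ _)

/-! ### Key lemma -/

lemma key : ∀ (n : ℕ) (N : NSeq) (v : NLab), depth N ≤ n → NtrAux (Ltr v N) n v = N := by
  intro n
  induction n with
  | zero =>
    intro N v h
    obtain ⟨inp, out, cs⟩ := N
    simp [depth] at h
  | succ n ih =>
    intro N v h
    obtain ⟨inp, out, cs⟩ := N
    simp only [NtrAux, inputsAt_root, outputAt_root, childrenOf_root]
    congr 1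
    rw [List.map_map]
    refine List.ext_getElem (by simp) fun k h1 h2 => ?_
    simp only [List.length_map, List.length_range'] at h1
    simp only [List.getElem_map, List.getElem_range', Function.comp_apply,
      Nat.zero_add, Nat.one_mul]
    have hk : k < cs.length := h1
    have hA := labA (NSeq.node inp out cs) v
    have hagree := agree (Ltr v (.node inp out cs)) (Ltr (v ++ [k]) cs[k]) (v ++ [k])
      (fun u hu => queries_child v inp out cs k hk u hu)
      (fun q hq => by
        obtain ⟨j, hj⟩ := (hA.2.2 q hq).2
        rw [hj]; exact List.prefix_append _ _)
      n (v ++ [k]) (List.prefix_refl _)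
    rw [hagree]
    refine ih cs[k] (v ++ [k]) ?_
    have := depth_mem (List.getElem_mem hk)
    simp only [depth] at h
    omega

end RT

theorem nested_labelled_roundtrip (N : NSeq) (hfull : outCount N = 1) (w : NLab) :
    Ntr (Ltr w N) w = N := by
  unfold Ntr
  exact RT.key _ N w (RT.depthA N w)
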